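/- Let H be a complex Hilbert space, Π an orthogonal projection on H (a bounded operator with Π = Π* = Π²), and χ, η bounded self-adjoint operators on H with χ² + η² ≤ 1 in the Loewner order. Define the localized operators X = ΠχΠ + (1−Π)χ(1−Π) and Y = ΠηΠ + (1−Π)η(1−Π). If Q and Q' are bounded self-adjoint operators on H satisfying −Π ≤ Q ≤ 1−Π and −Π ≤ Q' ≤ 1−Π, then −Π ≤ X Q X + Y Q' Y ≤ 1 − Π. -/

import Mathlib

/-!
The localization `L a = P a P + (1 - P) a (1 - P)` commutes with `P`, so
`L a * P * L a = P a P a P ≤ P a² P`, the inequality because `a (1 - P) a ≥ 0`. Hence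
`X P X + Y P Y ≤ P (χ² + η²) P ≤ P`, and conjugating `-P ≤ Q`, `-P ≤ Q'` by `X` and `Y` gives
the lower bound. Localizing with respect to `1 - P` gives the same operators, so the upper bound is
the lower bound for the projection `1 - P` and the operators `-Q`, `-Q'`. The argument only uses
the axioms of a star-ordered ring, which the operators on `H` form under the Loewner order.
-/

open scoped ComplexOrder

/-- The Loewner order on bounded operators on a complex Hilbert space:
`A ≤ B` iff `⟨x, (B - A) x⟩ ≥ 0` for all `x` (as a complex number, using the
partial order on `ℂ`, i.e. `⟨x, (B - A) x⟩` is a nonnegative real). -/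
def LoewnerLE {H : Type*} [NormedAddCommGroup H] [InnerProductSpace ℂ H]
    (A B : H →L[ℂ] H) : Prop :=
  ∀ x : H, (0 : ℂ) ≤ (inner ℂ x ((B - A) x) : ℂ)

theorem loewnerLE_iff_le {H : Type*} [NormedAddCommGroup H] [InnerProductSpace ℂ H]
    {A B : H →L[ℂ] H} : LoewnerLE A B ↔ A ≤ B := by
  rw [ContinuousLinearMap.le_def, ContinuousLinearMap.isPositive_iff_complex]
  refine forall_congr' fun x => ?_
  rw [← inner_conj_symm x, Complex.nonneg_iff, Complex.ext_iff]
  simp only [RCLike.re_to_complex, Complex.ofReal_re, Complex.ofReal_im, Complex.conj_re,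
    Complex.conj_im, true_and]
  grind

section Localize

variable {R : Type*} [Ring R]

def localize (p a : R) : R := p * a * p + (1 - p) * a * (1 - p)

theorem localize_one_sub (p a : R) : localize (1 - p) a = localize p a := by
  rw [localize, localize, sub_sub_cancel, add_comm]

namespace IsIdempotentElem

variable {p : R} (hp : IsIdempotentElem p) (a : R)
include hp

theorem mul_localize : p * localize p a = p * a * p := by
  simp only [localize, mul_add, mul_sub, sub_mul, mul_one, ← mul_assoc, hp.eq, sub_self, add_zero]

theorem localize_mul : localize p a * p = p * a * p := by
  simp only [localize, add_mul, mul_sub, sub_mul, mul_one, one_mul, mul_assoc, hp.eq, sub_self,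
    add_zero]

theorem localize_mul_mul_localize : localize p a * p * localize p a = p * a * p * a * p := by
  calc localize p a * p * localize p a = localize p a * p * (p * localize p a) := by
        rw [← mul_assoc, mul_assoc _ p p, hp.eq]
    _ = p * a * (p * p) * a * p := by rw [hp.localize_mul, hp.mul_localize]; noncomm_ring
    _ = p * a * p * a * p := by rw [hp.eq]

end IsIdempotentElem

variable [StarRing R]

theorem IsSelfAdjoint.localize {p a : R} (hp : IsSelfAdjoint p) (ha : IsSelfAdjoint a) :
    IsSelfAdjoint (localize p a) := by
  simp only [IsSelfAdjoint, _root_.localize, star_add, star_mul, star_sub, star_one, hp.star_eq,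
    ha.star_eq, mul_assoc]

variable [PartialOrder R] [StarOrderedRing R]

theorem IsStarProjection.conjugate_conjugate_le {p a : R} (hp : IsStarProjection p)
    (ha : IsSelfAdjoint a) :
    p * a * p * a * p ≤ p * (a * a) * p := by
  have : a * p * a ≤ a * a := by
    calc a * p * a ≤ a * p * a + a * (1 - p) * a :=
          le_add_of_nonneg_right (ha.conjugate_nonneg hp.one_sub_nonneg)
      _ = a * a := by noncomm_ring
  simpa only [mul_assoc] using hp.isSelfAdjoint.conjugate_le_conjugate this

theorem IsStarProjection.localize_mul_mul_localize_add_le {p a b : R} (hp : IsStarProjection p)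
    (ha : IsSelfAdjoint a) (hb : IsSelfAdjoint b) (hab : a * a + b * b ≤ 1) :
    localize p a * p * localize p a + localize p b * p * localize p b ≤ p := by
  have hp1 := hp.isIdempotentElem
  calc localize p a * p * localize p a + localize p b * p * localize p b
      = p * a * p * a * p + p * b * p * b * p := by
        rw [hp1.localize_mul_mul_localize, hp1.localize_mul_mul_localize]
    _ ≤ p * (a * a) * p + p * (b * b) * p :=
        add_le_add (hp.conjugate_conjugate_le ha) (hp.conjugate_conjugate_le hb)
    _ = p * (a * a + b * b) * p := by noncomm_ring
    _ ≤ p * 1 * p := hp.isSelfAdjoint.conjugate_le_conjugate hab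
    _ = p := by rw [mul_one, hp1.eq]

theorem IsStarProjection.neg_le_localize_mul_mul_localize_add {p a b q q' : R}
    (hp : IsStarProjection p) (ha : IsSelfAdjoint a) (hb : IsSelfAdjoint b)
    (hab : a * a + b * b ≤ 1) (hq : -p ≤ q) (hq' : -p ≤ q') :
    -p ≤ localize p a * q * localize p a + localize p b * q' * localize p b := by
  calc -p ≤ -(localize p a * p * localize p a + localize p b * p * localize p b) :=
        neg_le_neg (hp.localize_mul_mul_localize_add_le ha hb hab)
    _ = localize p a * -p * localize p a + localize p b * -p * localize p b := by noncomm_ring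
    _ ≤ localize p a * q * localize p a + localize p b * q' * localize p b :=
        add_le_add ((hp.isSelfAdjoint.localize ha).conjugate_le_conjugate hq)
          ((hp.isSelfAdjoint.localize hb).conjugate_le_conjugate hq')

theorem IsStarProjection.localize_mul_mul_localize_add_le_one_sub {p a b q q' : R}
    (hp : IsStarProjection p) (ha : IsSelfAdjoint a) (hb : IsSelfAdjoint b)
    (hab : a * a + b * b ≤ 1) (hq : q ≤ 1 - p) (hq' : q' ≤ 1 - p) :
    localize p a * q * localize p a + localize p b * q' * localize p b ≤ 1 - p := by
  have h := hp.one_sub.neg_le_localize_mul_mul_localize_add ha hb hab (neg_le_neg hq)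
    (neg_le_neg hq')
  rw [localize_one_sub, localize_one_sub] at h
  simpa only [mul_neg, neg_mul, ← neg_add, neg_le_neg_iff] using h

end Localize

theorem stmt0_general {H : Type*} [NormedAddCommGroup H] [InnerProductSpace ℂ H] [CompleteSpace H]
    (P : H →L[ℂ] H) (hP : IsSelfAdjoint P) (hP2 : P * P = P)
    (χ η : H →L[ℂ] H) (hχ : IsSelfAdjoint χ) (hη : IsSelfAdjoint η)
    (hχη : LoewnerLE (χ * χ + η * η) 1)
    (X Y : H →L[ℂ] H)
    (hX : X = P * χ * P + (1 - P) * χ * (1 - P))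
    (hY : Y = P * η * P + (1 - P) * η * (1 - P))
    (Q Q' : H →L[ℂ] H)
    (hQl : LoewnerLE (-P) Q) (hQu : LoewnerLE Q (1 - P))
    (hQ'l : LoewnerLE (-P) Q') (hQ'u : LoewnerLE Q' (1 - P)) :
    LoewnerLE (-P) (X * Q * X + Y * Q' * Y) ∧
      LoewnerLE (X * Q * X + Y * Q' * Y) (1 - P) := by
  have hProj : IsStarProjection P := ⟨hP2, hP⟩
  rw [loewnerLE_iff_le] at hχη hQl hQu hQ'l hQ'u
  rw [loewnerLE_iff_le, loewnerLE_iff_le, hX, hY]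
  exact ⟨hProj.neg_le_localize_mul_mul_localize_add hχ hη hχη hQl hQ'l,
    hProj.localize_mul_mul_localize_add_le_one_sub hχ hη hχη hQu hQ'u⟩

theorem stmt0 {H : Type*} [NormedAddCommGroup H] [InnerProductSpace ℂ H] [CompleteSpace H]
    (P : H →L[ℂ] H) (hP : IsSelfAdjoint P) (hP2 : P * P = P)
    (χ η : H →L[ℂ] H) (hχ : IsSelfAdjoint χ) (hη : IsSelfAdjoint η)
    (hχη : LoewnerLE (χ * χ + η * η) 1)
    (X Y : H →L[ℂ] H)
    (hX : X = P * χ * P + (1 - P) * χ * (1 - P))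
    (hY : Y = P * η * P + (1 - P) * η * (1 - P))
    (Q Q' : H →L[ℂ] H) (hQ : IsSelfAdjoint Q) (hQ' : IsSelfAdjoint Q')
    (hQl : LoewnerLE (-P) Q) (hQu : LoewnerLE Q (1 - P))
    (hQ'l : LoewnerLE (-P) Q') (hQ'u : LoewnerLE Q' (1 - P)) :
    LoewnerLE (-P) (X * Q * X + Y * Q' * Y) ∧
      LoewnerLE (X * Q * X + Y * Q' * Y) (1 - P) :=
  stmt0_general P hP hP2 χ η hχ hη hχη X Y hX hY Q Q' hQl hQu hQ'l hQ'u
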